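/- For every (x₁,x₂,x₃) ∈ ℝ³ with x₁ ≥ 1/2, x₂ ≥ 1/2 and x₂x₃ < 1, one has f(x₁,x₂,x₃) = 1 if and only if x₃ = 0. In particular, (1,1,0) is a local minimum of f that is not a strict local minimum. -/
import Mathlib


/-- The ReLU neural network objective `f(x₁,x₂,x₃) = |x₃·max(x₂,0) − 1| + |x₃·max(x₁+x₂,0)|`,
viewed as a function on `ℝ³` (with coordinates `x 0, x 1, x 2`). -/
noncomputable def f (x : EuclideanSpace ℝ (Fin 3)) : ℝ :=
  |x 2 * max (x 1) 0 - 1| + |x 2 * max (x 0 + x 1) 0|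

/-- The point `(1,1,0)` in `ℝ³`. -/
noncomputable def p : EuclideanSpace ℝ (Fin 3) :=
  (WithLp.equiv 2 (Fin 3 → ℝ)).symm ![1, 1, 0]

lemma coord_le (x : EuclideanSpace ℝ (Fin 3)) (i : Fin 3) : |x i| ≤ ‖x‖ := by
  rw [EuclideanSpace.norm_eq]
  have h1 : |x i| = Real.sqrt (‖x i‖ ^ 2) := by
    rw [Real.sqrt_sq_eq_abs]; simp [abs_abs]
  rw [h1]
  apply Real.sqrt_le_sqrt
  exact Finset.single_le_sum (f := fun j => ‖x j‖ ^ 2) (fun j _ => by positivity)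
    (Finset.mem_univ i)

lemma key (x : EuclideanSpace ℝ (Fin 3)) (h0 : (0:ℝ) < x 0) (h1 : (0:ℝ) < x 1)
    (h2 : x 1 * x 2 < 1) : f x = 1 - x 1 * x 2 + |x 2| * (x 0 + x 1) := by
  unfold f
  rw [max_eq_left h1.le, max_eq_left (by linarith)]
  rw [abs_of_nonpos (by nlinarith), abs_mul]
  ring_nf
  rw [abs_of_nonneg (by linarith : (0:ℝ) ≤ x 1 + x 0)]
  ring

/-- For every `(x₁,x₂,x₃) ∈ ℝ³` with `x₁ ≥ 1/2`, `x₂ ≥ 1/2` and `x₂x₃ < 1`, one has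
`f(x₁,x₂,x₃) = 1` if and only if `x₃ = 0`. In particular, `(1,1,0)` is a local minimum of `f`
that is not a strict local minimum. -/
theorem stmt2 :
    (∀ x : EuclideanSpace ℝ (Fin 3), 1 / 2 ≤ x 0 → 1 / 2 ≤ x 1 → x 1 * x 2 < 1 →
      (f x = 1 ↔ x 2 = 0)) ∧
    (∃ ε > 0, ∀ x : EuclideanSpace ℝ (Fin 3), ‖x - p‖ ≤ ε → f p ≤ f x) ∧
    ¬ (∃ ε > 0, ∀ x : EuclideanSpace ℝ (Fin 3), ‖x - p‖ ≤ ε → x ≠ p → f p < f x) := by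
  have hp0 : p 0 = 1 := rfl
  have hp1 : p 1 = 1 := rfl
  have hp2 : p 2 = 0 := rfl
  have hfp : f p = 1 := by unfold f; rw [hp0, hp1, hp2]; norm_num
  refine ⟨?_, ?_, ?_⟩
  · intro x h0 h1 h2
    rw [key x (by linarith) (by linarith) h2]
    constructor
    · intro h
      have : |x 2| * (x 0 + x 1) = x 1 * x 2 := by linarith
      rcases lt_trichotomy (x 2) 0 with hc | hc | hc
      · rw [abs_of_neg hc] at this; nlinarith
      · exact hc
      · rw [abs_of_pos hc] at this; nlinarith
    · intro h; rw [h]; simp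
  · refine ⟨1/4, by norm_num, fun x hx => ?_⟩
    have c0 := abs_le.mp ((coord_le (x - p) 0).trans hx)
    have c1 := abs_le.mp ((coord_le (x - p) 1).trans hx)
    have c2 := abs_le.mp ((coord_le (x - p) 2).trans hx)
    have s0 : (x - p) 0 = x 0 - 1 := by simp [hp0]
    have s1 : (x - p) 1 = x 1 - 1 := by simp [hp1]
    have s2 : (x - p) 2 = x 2 := by simp [hp2]
    rw [s0] at c0; rw [s1] at c1; rw [s2] at c2
    have h2 : x 1 * x 2 < 1 := by nlinarith [c2.1, c2.2, c1.1, c1.2]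
    rw [hfp, key x (by linarith [c0.1]) (by linarith [c1.1]) h2]
    have : x 1 * x 2 ≤ |x 2| * x 1 := by
      rcases le_or_gt 0 (x 2) with hc | hc
      · rw [abs_of_nonneg hc]; nlinarith [c1.1]
      · rw [abs_of_neg hc]; nlinarith [c1.1]
    nlinarith [abs_nonneg (x 2)]
  · rintro ⟨ε, hε, h⟩
    set q : EuclideanSpace ℝ (Fin 3) :=
      (WithLp.equiv 2 (Fin 3 → ℝ)).symm ![1 + min ε 1, 1, 0] with hq
    have hm : (0:ℝ) < min ε 1 := lt_min hε one_pos
    have hd : q - p = (WithLp.equiv 2 (Fin 3 → ℝ)).symm ![min ε 1, 0, 0] := by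
      apply PiLp.ext; intro i
      fin_cases i <;> simp [hq, p] <;> ring
    have hnorm : ‖q - p‖ = min ε 1 := by
      rw [hd, EuclideanSpace.norm_eq]
      have : ∀ i : Fin 3, ‖((WithLp.equiv 2 (Fin 3 → ℝ)).symm ![min ε 1, 0, 0] : EuclideanSpace ℝ (Fin 3)) i‖ ^ 2 = ![min ε 1 ^ 2, 0, 0] i := by
        intro i; fin_cases i <;> simp [sq_abs]
      rw [Finset.sum_congr rfl (fun i _ => this i)]
      simp [Fin.sum_univ_three]
      exact Real.sqrt_sq hm.le
    have hne : q ≠ p := by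
      intro heq
      have : q 0 = p 0 := by rw [heq]
      simp [hq, hp0] at this
      linarith
    have hfq : f q = 1 := by
      unfold f
      have e0 : q 0 = 1 + min ε 1 := rfl
      have e1 : q 1 = 1 := rfl
      have e2 : q 2 = 0 := rfl
      rw [e0, e1, e2]; norm_num
    have := h q (by rw [hnorm]; exact min_le_left _ _) hne
    rw [hfp, hfq] at this
    exact lt_irrefl 1 this
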